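/- arXiv:1301.5038 — 2 statements merged into one kernel-verified Lean document; each statement's English description precedes it below -/
import Mathlib

section
/- Let f, g ∈ F(x,y) be rational functions in two variables over a field F of characteristic zero satisfying D_y(f) = D_x(g). Then the denominator of f (as an element of F(x)(y), written in lowest terms over F(x)[y]) divides the denominator of g in F(x)[y]. -/
/-
Clearing denominators, `D_y f = D_x g` with `f = a / b`, `g = c / d` becomes
`(a' b - a b') d² = (D c · d - c · D d) b²` in `K[y]`, `K = F(x)`, where `'` is `d/dy` and `D` is
the coefficientwise derivation. Let `p` be a prime of `K[y]` with `p^(e+1) ∥ b` and `p^k ∥ d`.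
Since `p ∤ a` and, in characteristic zero, `p ∤ p'`, the numerator `a' b - a b'` is divisible by
`p` exactly `e` times, while the Leibniz rule alone gives `p^k ∣ p (D c · d - c · D d)`. Counting
factors of `p` in `p` times the identity yields `e + 2k + 1 ≥ 2(e + 1) + k`, i.e. `e + 1 ≤ k`;
as this holds for every prime, `b ∣ d`.
-/

open Polynomial

/-- The derivation `d/dy` on a field of rational functions `E(y)` (quotient rule on the
reduced representation `num/denom`). -/
noncomputable def Dr {E : Type*} [Field E] (f : RatFunc E) : RatFunc E :=
  (algebraMap E[X] (RatFunc E) (derivative f.num) * algebraMap E[X] (RatFunc E) f.denom -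
      algebraMap E[X] (RatFunc E) f.num * algebraMap E[X] (RatFunc E) (derivative f.denom)) /
    (algebraMap E[X] (RatFunc E) f.denom) ^ 2

/-- Coefficientwise derivation `D_x` on polynomials in `y` over `F(x)`. -/
noncomputable def DxP {F : Type*} [Field F] (p : Polynomial (RatFunc F)) :
    Polynomial (RatFunc F) :=
  p.sum fun n c => Polynomial.C (Dr c) * Polynomial.X ^ n

/-- The derivation `D_x` on `F(x,y)`, viewed as `F(x)(y)`. -/
noncomputable def DxR {F : Type*} [Field F] (f : RatFunc (RatFunc F)) : RatFunc (RatFunc F) :=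
  (algebraMap _ (RatFunc (RatFunc F)) (DxP f.num) * algebraMap _ _ f.denom -
      algebraMap _ (RatFunc (RatFunc F)) f.num * algebraMap _ _ (DxP f.denom)) /
    (algebraMap (Polynomial (RatFunc F)) (RatFunc (RatFunc F)) f.denom) ^ 2

section Dr

variable {E : Type*} [Field E]

theorem Dr_div (a b : E[X]) (hb : b ≠ 0) :
    Dr (algebraMap E[X] (RatFunc E) a / algebraMap E[X] (RatFunc E) b) =
      (algebraMap E[X] (RatFunc E) (derivative a) * algebraMap E[X] (RatFunc E) b -
        algebraMap E[X] (RatFunc E) a * algebraMap E[X] (RatFunc E) (derivative b)) /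
      (algebraMap E[X] (RatFunc E) b) ^ 2 := by
  set f : RatFunc E := algebraMap E[X] (RatFunc E) a / algebraMap E[X] (RatFunc E) b
  have hb' : algebraMap E[X] (RatFunc E) b ≠ 0 := RatFunc.algebraMap_ne_zero hb
  have hdenom : algebraMap E[X] (RatFunc E) f.denom ≠ 0 :=
    RatFunc.algebraMap_ne_zero f.denom_ne_zero
  have hcross : f.num * b = a * f.denom := IsFractionRing.injective E[X] (RatFunc E) <| by
    rw [map_mul, map_mul, ← div_eq_div_iff hdenom hb', RatFunc.num_div_denom]
  have hcross' : derivative f.num * b + f.num * derivative b =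
      derivative a * f.denom + a * derivative f.denom := by
    simpa only [derivative_mul] using congrArg derivative hcross
  have key : (derivative f.num * f.denom - f.num * derivative f.denom) * b ^ 2 =
      (derivative a * b - a * derivative b) * f.denom ^ 2 := by
    linear_combination (b * f.denom) * hcross' -
      (derivative b * f.denom + b * derivative f.denom) * hcross
  rw [Dr, div_eq_div_iff (pow_ne_zero 2 hdenom) (pow_ne_zero 2 hb')]
  simpa only [map_mul, map_sub, map_pow] using congrArg (algebraMap E[X] (RatFunc E)) key

theorem Dr_zero : Dr (0 : RatFunc E) = 0 := by
  simp [Dr]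

theorem Dr_add (u v : RatFunc E) : Dr (u + v) = Dr u + Dr v := by
  obtain ⟨a, b, hb, rfl⟩ : ∃ a b : E[X], b ≠ 0 ∧ u = algebraMap _ _ a / algebraMap _ _ b :=
    ⟨u.num, u.denom, u.denom_ne_zero, u.num_div_denom.symm⟩
  obtain ⟨c, d, hd, rfl⟩ : ∃ c d : E[X], d ≠ 0 ∧ v = algebraMap _ _ c / algebraMap _ _ d :=
    ⟨v.num, v.denom, v.denom_ne_zero, v.num_div_denom.symm⟩
  have hb' := RatFunc.algebraMap_ne_zero hb
  have hd' := RatFunc.algebraMap_ne_zero hd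
  rw [div_add_div _ _ hb' hd', ← map_mul, ← map_mul, ← map_mul, ← map_add,
    Dr_div _ _ (mul_ne_zero hb hd), Dr_div _ _ hb, Dr_div _ _ hd]
  simp only [derivative_mul, map_add, map_mul]
  field_simp
  ring

theorem Dr_mul (u v : RatFunc E) : Dr (u * v) = Dr u * v + u * Dr v := by
  obtain ⟨a, b, hb, rfl⟩ : ∃ a b : E[X], b ≠ 0 ∧ u = algebraMap _ _ a / algebraMap _ _ b :=
    ⟨u.num, u.denom, u.denom_ne_zero, u.num_div_denom.symm⟩
  obtain ⟨c, d, hd, rfl⟩ : ∃ c d : E[X], d ≠ 0 ∧ v = algebraMap _ _ c / algebraMap _ _ d :=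
    ⟨v.num, v.denom, v.denom_ne_zero, v.num_div_denom.symm⟩
  have hb' := RatFunc.algebraMap_ne_zero hb
  have hd' := RatFunc.algebraMap_ne_zero hd
  rw [div_mul_div_comm, ← map_mul, ← map_mul, Dr_div _ _ (mul_ne_zero hb hd), Dr_div _ _ hb,
    Dr_div _ _ hd]
  simp only [derivative_mul, map_add, map_mul]
  field_simp
  ring

end Dr

section DxP

variable {F : Type*} [Field F]

theorem DxP_monomial (n : ℕ) (c : RatFunc F) : DxP (monomial n c) = C (Dr c) * X ^ n := by
  simp [DxP, sum_monomial_index, Dr_zero]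

theorem DxP_add (p q : (RatFunc F)[X]) : DxP (p + q) = DxP p + DxP q :=
  sum_add_index _ _ _ (by simp [Dr_zero]) fun _ _ _ ↦ by rw [Dr_add, map_add, add_mul]

theorem DxP_mul (p q : (RatFunc F)[X]) : DxP (p * q) = DxP p * q + p * DxP q := by
  induction p using Polynomial.induction_on' with
  | add p₁ p₂ h₁ h₂ => rw [add_mul, DxP_add, DxP_add, h₁, h₂]; ring
  | monomial n a =>
    induction q using Polynomial.induction_on' with
    | add q₁ q₂ h₁ h₂ => rw [mul_add, DxP_add, DxP_add, h₁, h₂]; ring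
    | monomial m b =>
      rw [monomial_mul_monomial, DxP_monomial, DxP_monomial, DxP_monomial, Dr_mul,
        ← C_mul_X_pow_eq_monomial, ← C_mul_X_pow_eq_monomial, map_add, map_mul, map_mul, pow_add]
      ring

end DxP

section Leibniz

variable {A : Type*} [CommSemiring A] {D : A → A} (hD : ∀ x y, D (x * y) = D x * y + x * D y)
include hD

theorem pow_dvd_mul_pow_of_leibniz (p : A) (k : ℕ) : p ^ k ∣ p * D (p ^ k) := by
  induction k with
  | zero => simp
  | succ k ih =>
    rw [pow_succ, hD, mul_add, ← mul_assoc]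
    exact dvd_add (mul_dvd_mul ih dvd_rfl) ⟨D p, by ring⟩

theorem pow_dvd_mul_of_leibniz {p d : A} {k : ℕ} (h : p ^ k ∣ d) : p ^ k ∣ p * D d := by
  obtain ⟨w, rfl⟩ := h
  rw [hD, mul_add, ← mul_assoc]
  exact dvd_add ((pow_dvd_mul_pow_of_leibniz hD p k).mul_right w) ⟨p * D w, by ring⟩

end Leibniz

theorem Prime.le_of_pow_mul_eq_pow_mul {M : Type*} [CommMonoidWithZero M] [IsLeftCancelMulZero M]
    {p x y : M} {m n : ℕ} (hp : Prime p) (hx : ¬p ∣ x) (h : p ^ m * x = p ^ n * y) : n ≤ m := by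
  by_contra! hmn
  have : p ^ m * p ∣ p ^ m * x := by
    rw [h, ← pow_succ]
    exact (pow_dvd_pow p hmn).mul_right y
  exact hx ((mul_dvd_mul_iff_left (pow_ne_zero m hp.ne_zero)).mp this)

section Derivative

variable {K : Type*} [Field K] [CharZero K]

theorem Prime.not_dvd_derivative {p : K[X]} (hp : Prime p) : ¬p ∣ derivative p :=
  fun h ↦ hp.not_isUnit (hp.irreducible.separable.isUnit_of_dvd' dvd_rfl h)

theorem Polynomial.exists_derivative_mul_sub_eq_pow_mul {p a u : K[X]} (hp : Prime p)
    (hpa : ¬p ∣ a) (hpu : ¬p ∣ u) (e : ℕ) :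
    ∃ W, ¬p ∣ W ∧ derivative a * (p ^ (e + 1) * u) - a * derivative (p ^ (e + 1) * u) =
      p ^ e * W := by
  -- modulo `p`, `W` is `-(e + 1) a p' u`, and none of its factors is divisible by `p`
  refine ⟨p * (derivative a * u - a * derivative u) - C (e + 1 : K) * (a * derivative p * u),
    fun hW ↦ ?_, by rw [derivative_mul, derivative_pow_succ]; ring⟩
  have hunit : IsUnit (C (e + 1 : K)) := isUnit_C.mpr (Nat.cast_add_one_ne_zero e).isUnit
  have h := dvd_sub (dvd_mul_right p (derivative a * u - a * derivative u)) hW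
  rw [sub_sub_cancel, hunit.dvd_mul_left, hp.dvd_mul, hp.dvd_mul] at h
  exact h.elim (·.elim hpa hp.not_dvd_derivative) hpu

end Derivative

section Denominator

variable {K : Type*} [Field K] [CharZero K] {D : K[X] → K[X]}
  (hD : ∀ x y, D (x * y) = D x * y + x * D y)
include hD

theorem multiplicity_le_of_derivative_eq {a b c d : K[X]} (hab : IsCoprime a b) (hb : b ≠ 0)
    (hd : d ≠ 0) (h : (derivative a * b - a * derivative b) * d ^ 2 = (D c * d - c * D d) * b ^ 2)
    {p : K[X]} (hp : Prime p) : multiplicity p b ≤ multiplicity p d := by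
  obtain ⟨u, hbu, hpu⟩ := (FiniteMultiplicity.of_prime_left hp hb).exists_eq_pow_mul_and_not_dvd
  obtain ⟨v, hdv, hpv⟩ := (FiniteMultiplicity.of_prime_left hp hd).exists_eq_pow_mul_and_not_dvd
  set k := multiplicity p d
  rcases he : multiplicity p b with _ | e
  · exact Nat.zero_le k
  rw [he] at hbu
  have hpa : ¬p ∣ a := fun hpa ↦ hp.not_isUnit <| hab.isUnit_of_dvd' hpa <| hbu ▸
    (dvd_pow_self p e.succ_ne_zero).mul_right u
  obtain ⟨W, hpW, hW⟩ := exists_derivative_mul_sub_eq_pow_mul hp hpa hpu e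
  have hkd : p ^ k ∣ d := ⟨v, hdv⟩
  obtain ⟨M, hM⟩ : p ^ k ∣ p * (D c * d - c * D d) := by
    rw [mul_sub, mul_left_comm p c]
    exact dvd_sub ((hkd.mul_left _).mul_left p) ((pow_dvd_mul_of_leibniz hD hkd).mul_left c)
  have hpWv : ¬p ∣ W * v ^ 2 := fun h ↦ (hp.dvd_mul.1 h).elim hpW (hpv <| hp.dvd_of_dvd_pow ·)
  have key : p ^ (e + 2 * k + 1) * (W * v ^ 2) = p ^ (2 * (e + 1) + k) * (M * u ^ 2) :=
    calc p ^ (e + 2 * k + 1) * (W * v ^ 2)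
        = p * ((p ^ e * W) * (p ^ k * v) ^ 2) := by ring
      _ = p * ((D c * d - c * D d) * b ^ 2) := by rw [← hW, ← hbu, ← hdv, h]
      _ = (p * (D c * d - c * D d)) * b ^ 2 := by ring
      _ = p ^ (2 * (e + 1) + k) * (M * u ^ 2) := by rw [hM, hbu]; ring
  have := hp.le_of_pow_mul_eq_pow_mul hpWv key
  omega

theorem dvd_of_derivative_eq {a b c d : K[X]} (hab : IsCoprime a b) (hb : b ≠ 0)
    (hd : d ≠ 0) (h : (derivative a * b - a * derivative b) * d ^ 2 = (D c * d - c * D d) * b ^ 2) :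
    b ∣ d := by
  refine (UniqueFactorizationMonoid.dvd_iff_emultiplicity_le hb).2 fun p hp ↦ ?_
  rw [(FiniteMultiplicity.of_prime_left hp hb).emultiplicity_eq_multiplicity,
    (FiniteMultiplicity.of_prime_left hp hd).emultiplicity_eq_multiplicity]
  exact_mod_cast multiplicity_le_of_derivative_eq hD hab hb hd h hp

end Denominator

theorem stmt_10 {F : Type*} [Field F] [CharZero F] (f g : RatFunc (RatFunc F))
    (h : Dr f = DxR g) : f.denom ∣ g.denom := by
  have hf : algebraMap (RatFunc F)[X] (RatFunc (RatFunc F)) f.denom ≠ 0 :=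
    RatFunc.algebraMap_ne_zero f.denom_ne_zero
  have hg : algebraMap (RatFunc F)[X] (RatFunc (RatFunc F)) g.denom ≠ 0 :=
    RatFunc.algebraMap_ne_zero g.denom_ne_zero
  rw [Dr, DxR, div_eq_div_iff (pow_ne_zero 2 hf) (pow_ne_zero 2 hg)] at h
  have key : (derivative f.num * f.denom - f.num * derivative f.denom) * g.denom ^ 2 =
      (DxP g.num * g.denom - g.num * DxP g.denom) * f.denom ^ 2 :=
    IsFractionRing.injective (RatFunc F)[X] (RatFunc (RatFunc F)) <| by
      simpa only [map_mul, map_sub, map_pow] using h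
  exact dvd_of_derivative_eq DxP_mul f.isCoprime_num_denom f.denom_ne_zero g.denom_ne_zero key
end

section
/- Let K = k1/k2 ∈ E(y) be differential-reduced and nonzero. If p ∈ E[y] is nonzero, then k2·D(p) + k1·p ≠ 0; equivalently, K ≠ −D(p)/p for every nonzero polynomial p. -/
open Polynomial

/-- `K = k1/k2` is differential-reduced: `gcd(k2, k1 - i·D(k2)) = 1` for all integers `i`. -/
def DiffReduced {E : Type*} [Field E] (k1 k2 : E[X]) : Prop :=
  ∀ i : ℤ, IsCoprime k2 (k1 - (i : E[X]) * derivative k2)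

/-!
Suppose `k2 p' + k1 p = 0` with `p ≠ 0`. Then `p` is not constant; pick an irreducible factor
`q` of exact multiplicity `e ≥ 1`, so `p = q^e s` with `q ∤ s`. Dividing the equation by `q^(e-1)`
gives `k2 (e q' s + q s') + k1 q s = 0`. In characteristic zero `q ∤ e q'`, hence `q ∣ k2`, say
`k2 = q u`; dividing once more, `(k1 + e u q') s ≡ 0 (mod q)`, i.e. `q ∣ k1 + e D(k2)`.
So `q` is a common factor of `k2` and `k1 - i D(k2)` for `i = -e`, against differential-reducedness.
-/

lemma exists_eq_pow_succ_mul_not_dvd {α : Type*} [CommMonoidWithZero α] [IsCancelMulZero α]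
    [WfDvdMonoid α] {q p : α} (hq : Prime q) (hp : p ≠ 0) (hqp : q ∣ p) :
    ∃ (n : ℕ) (s : α), p = q ^ (n + 1) * s ∧ ¬ q ∣ s := by
  obtain ⟨s, hps, hqs⟩ := (FiniteMultiplicity.of_prime_left hq hp).exists_eq_pow_mul_and_not_dvd
  obtain ⟨n, hn⟩ := Nat.exists_eq_succ_of_ne_zero (multiplicity_ne_zero.mpr hqp)
  rw [hn] at hps
  exact ⟨n, s, hps, hqs⟩

lemma derivative_pow_succ_mul {R : Type*} [CommSemiring R] (q s : R[X]) (n : ℕ) :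
    derivative (q ^ (n + 1) * s) =
      q ^ n * ((n + 1 : R[X]) * derivative q * s + q * derivative s) := by
  rw [derivative_mul, derivative_pow_succ, ← C_eq_natCast, ← C_1, ← C_add]
  ring

section CharZero

variable {E : Type*} [Field E] [CharZero E]

lemma Irreducible.not_dvd_natCast_succ_mul_derivative {q : E[X]} (hq : Irreducible q) (n : ℕ) :
    ¬ q ∣ (n + 1 : E[X]) * derivative q := by
  have hunit : IsUnit (n + 1 : E[X]) := by
    rw [← C_eq_natCast, ← C_1, ← C_add, isUnit_C, isUnit_iff_ne_zero]
    exact_mod_cast n.succ_ne_zero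
  rw [hunit.dvd_mul_left, dvd_derivative_iff, derivative_eq_zero]
  exact hq.natDegree_pos.ne'

lemma Irreducible.dvd_and_dvd_of_mul_derivative_add_mul_eq_zero {q s k1 k2 : E[X]}
    (hq : Irreducible q) (hqs : ¬ q ∣ s) (n : ℕ)
    (h : k2 * derivative (q ^ (n + 1) * s) + k1 * (q ^ (n + 1) * s) = 0) :
    q ∣ k2 ∧ q ∣ k1 + (n + 1 : E[X]) * derivative k2 := by
  have hprime : Prime q := hq.prime
  have hreduced :
      k2 * ((n + 1 : E[X]) * derivative q * s + q * derivative s) + k1 * (q * s) = 0 := by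
    apply mul_left_cancel₀ (pow_ne_zero n hprime.ne_zero)
    rw [derivative_pow_succ_mul] at h
    linear_combination h
  have hk2 : q ∣ k2 := by
    have hdvd : q ∣ k2 * ((n + 1 : E[X]) * derivative q * s) :=
      ⟨-(k2 * derivative s + k1 * s), by linear_combination hreduced⟩
    rcases hprime.dvd_or_dvd hdvd with hk2 | hqs'
    · exact hk2
    · rcases hprime.dvd_or_dvd hqs' with hq' | hs
      · exact absurd hq' (hq.not_dvd_natCast_succ_mul_derivative n)
      · exact absurd hs hqs
  refine ⟨hk2, ?_⟩
  obtain ⟨u, rfl⟩ := hk2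
  have hdvd : q ∣ (k1 + (n + 1 : E[X]) * derivative (q * u)) * s := by
    refine ⟨(n + 1 : E[X]) * derivative u * s - u * derivative s, ?_⟩
    apply mul_left_cancel₀ hprime.ne_zero
    rw [derivative_mul]
    linear_combination hreduced
  exact (hprime.dvd_or_dvd hdvd).resolve_right hqs

end CharZero

theorem stmt_17_general {E : Type*} [Field E] [CharZero E] (k1 k2 : E[X]) (hk1 : k1 ≠ 0)
    (hdr : DiffReduced k1 k2)
    (p : E[X]) (hp : p ≠ 0) :
    k2 * derivative p + k1 * p ≠ 0 := by
  intro h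
  have hpdeg : p.natDegree ≠ 0 := by
    rw [← derivative_ne_zero]
    intro hp'
    rw [hp', mul_zero, zero_add] at h
    exact mul_ne_zero hk1 hp h
  obtain ⟨q, hq, hqp⟩ := exists_irreducible_of_natDegree_ne_zero hpdeg
  obtain ⟨n, s, rfl, hqs⟩ := exists_eq_pow_succ_mul_not_dvd hq.prime hp hqp
  obtain ⟨hqk2, hqk1⟩ := hq.dvd_and_dvd_of_mul_derivative_add_mul_eq_zero hqs n h
  have hcoprime := hdr (-(n + 1 : ℕ))
  push_cast at hcoprime
  rw [neg_mul, sub_neg_eq_add] at hcoprime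
  exact hq.not_isUnit (hcoprime.isUnit_of_dvd' hqk2 hqk1)

theorem stmt_17 {E : Type*} [Field E] [CharZero E] (k1 k2 : E[X]) (hk1 : k1 ≠ 0)
    (hk2 : k2 ≠ 0) (hcop : IsCoprime k1 k2) (hdr : DiffReduced k1 k2)
    (p : E[X]) (hp : p ≠ 0) :
    k2 * derivative p + k1 * p ≠ 0 :=
  stmt_17_general k1 k2 hk1 hdr p hp
end
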